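/- arXiv:2012.05275 — 4 statements merged into one kernel-verified Lean document; each statement's English description precedes it below -/
import Mathlib

section
/- For any binary word w of length n, applying the flip operator F (which simultaneously reverses every occurrence of the factor 10, i.e., swaps every adjacent pair w(i)=1, w(i+1)=0, where the swapped pairs are non-overlapping and chosen greedily left to right covering all 10 factors) n-1 times yields the sorted word 0^a 1^b, where a is the number of zeros and b the number of ones in w. -/
/-- Flip operator `F`: simultaneously reverse every (automatically pairwise disjoint)
`10` factor, i.e. every zero immediately preceded by a one swaps with that one.
Here `false` plays the role of `0` and `true` of `1`. -/
def flipWord : List Bool → List Bool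
  | true :: false :: rest => false :: true :: flipWord rest
  | a :: rest => a :: flipWord rest
  | [] => []

/-- The positions (indices) of the zeros (`false`) of a binary word, left to right. -/
def zeroPositions (w : List Bool) : List ℕ :=
  (List.range w.length).filter (fun i => w.getD i true = false)

/-- `u ⊴ v` : for every `i`, the `i`-th zero of `u` occurs at a position at most
that of the `i`-th zero of `v`. -/
def WLE (u v : List Bool) : Prop :=
  List.Forall₂ (· ≤ ·) (zeroPositions u) (zeroPositions v)

/-- One tumble move: choose pairwise non-overlapping factors of the form `1^+0^+`
covering every `10` factor, and reverse each in place. `Tumble w u` means `u ∈ T(w)`. -/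
inductive Tumble : List Bool → List Bool → Prop
  | nil : Tumble [] []
  | zero {w u} : Tumble w u → Tumble (false :: w) (false :: u)
  | one {w u} : Tumble w u → w.head? ≠ some false → Tumble (true :: w) (true :: u)
  | block {w u} (a b : ℕ) : 0 < a → 0 < b → Tumble w u →
      Tumble (List.replicate a true ++ List.replicate b false ++ w)
             (List.replicate b false ++ List.replicate a true ++ u)

/-- `TumbleN t w u` : `u` is reachable from `w` by exactly `t` tumble moves. -/
def TumbleN : ℕ → List Bool → List Bool → Prop
  | 0 => Eq
  | t + 1 => fun w u => ∃ v, TumbleN t w v ∧ Tumble v u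

/-- The 0/1 projection at threshold `k`: the `i`-th letter is `0` iff `w(i) < k`. -/
def proj (k : ℕ) (w : List ℕ) : List Bool := w.map (fun x => decide (k ≤ x))

/-- Pop-stack operator `P`: partition into maximal strictly decreasing runs and
reverse each run in place. -/
def popStack (w : List ℕ) : List ℕ :=
  ((w.splitBy (fun a b => decide (b < a))).map List.reverse).flatten

lemma flip_false (w : List Bool) : flipWord (false :: w) = false :: flipWord w := by
  cases w with
  | nil => rfl
  | cons a t => cases a <;> rfl

lemma flip_tf (w : List Bool) : flipWord (true :: false :: w) = false :: true :: flipWord w := rfl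
lemma flip_tt (w : List Bool) : flipWord (true :: true :: w) = true :: flipWord (true :: w) := rfl

/-- gap encoding: `toW (g::gs)` = 1^g then 0 then toW gs (last entry: just 1^g). -/
def toW : List ℕ → List Bool
  | [] => []
  | [g] => List.replicate g true
  | g :: gs => List.replicate g true ++ false :: toW gs

lemma toW_cons (g : ℕ) (h : ℕ) (t : List ℕ) :
    toW (g :: h :: t) = List.replicate g true ++ false :: toW (h :: t) := rfl

lemma toW_succ (g : ℕ) (t : List ℕ) : toW ((g+1) :: t) = true :: toW (g :: t) := by
  cases t <;> simp [toW, List.replicate_succ]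

/-- one token-passing step on gaps; `c` = incoming carry. -/
def stepG (c : Bool) : List ℕ → List ℕ
  | [] => []
  | [g] => [g + cond c 1 0]
  | g :: h :: gs => (g - 1 + cond c 1 0) :: stepG (decide (0 < g)) (h :: gs)

lemma stepG_len (c : Bool) (gs : List ℕ) : (stepG c gs).length = gs.length := by
  induction c, gs using stepG.induct with
  | case1 c => rfl
  | case2 c g => rfl
  | case3 c g h t ih => simpa [stepG] using ih

lemma stepG_sum (c : Bool) (gs : List ℕ) (hne : gs ≠ []) :
    (stepG c gs).sum = gs.sum + cond c 1 0 := by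
  induction c, gs using stepG.induct with
  | case1 c => simp at hne
  | case2 c g => simp [stepG]
  | case3 c g h t ih =>
    have := ih (by simp)
    simp only [stepG, List.sum_cons] at this ⊢
    rcases Nat.eq_zero_or_pos g with hg | hg
    · subst hg; simp at this ⊢; omega
    · simp [hg] at this ⊢; cases c <;> simp <;> omega

/-- carry `true` = insert one extra leading `true` after flipping. -/
lemma toW_carry (gs : List ℕ) (hne : gs ≠ []) :
    toW (stepG true gs) = true :: toW (stepG false gs) := by
  match gs with
  | [g] => simp [stepG, toW_succ]
  | g :: h :: t =>
    rcases Nat.eq_zero_or_pos g with hg | hg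
    · subst hg
      simp [stepG, toW_succ]
    · simp [stepG, toW_succ]

/-- Key: flip corresponds to stepG on gaps. -/
lemma flip_toW (gs : List ℕ) : flipWord (toW gs) = toW (stepG false gs) := by
  induction gs with
  | nil => rfl
  | cons g t ih =>
    induction g with
    | zero =>
      cases t with
      | nil => rfl
      | cons h t' =>
        have hcons : ∃ y ys, stepG false (h :: t') = y :: ys := by
          have := stepG_len false (h :: t')
          cases hx : stepG false (h :: t') with
          | nil => rw [hx] at this; simp at this
          | cons y ys => exact ⟨y, ys, rfl⟩
        obtain ⟨y, ys, hx⟩ := hcons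
        show flipWord (false :: toW (h :: t')) = toW (stepG false (0 :: h :: t'))
        rw [flip_false, ih, stepG]
        simp [hx, toW_cons]
    | succ a iha =>
      cases a with
      | zero =>
        cases t with
        | nil => rfl
        | cons h t' =>
          have hcons : ∃ y ys, stepG true (h :: t') = y :: ys := by
            have := stepG_len true (h :: t')
            cases hx : stepG true (h :: t') with
            | nil => rw [hx] at this; simp at this
            | cons y ys => exact ⟨y, ys, rfl⟩
          obtain ⟨y, ys, hx⟩ := hcons
          show flipWord (true :: false :: toW (h :: t')) = toW (stepG false (1 :: h :: t'))
          rw [flip_tf, ih, ← toW_carry (h :: t') (by simp), stepG]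
          simp [hx, toW_cons]
      | succ b =>
        have h1 : toW ((b+1+1) :: t) = true :: toW ((b+1) :: t) := toW_succ _ _
        have h2 : toW ((b+1) :: t) = true :: toW (b :: t) := toW_succ _ _
        rw [h1, h2, flip_tt, ← h2, iha]
        cases t with
        | nil => simp [stepG, toW, List.replicate_succ]
        | cons h t' =>
          show true :: toW (stepG false ((b+1) :: h :: t')) = toW (stepG false ((b+2) :: h :: t'))
          simp only [stepG, Nat.succ_sub_one]
          rw [show decide (0 < b+1) = decide (0 < b+2) from by simp]
          exact (toW_succ _ _).symm

lemma stepG_prefix (c : Bool) (gs : List ℕ) :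
    ∀ j, j + 1 < gs.length →
      ((stepG c gs).take (j+1)).sum + (if 0 < gs.getD j 0 then 1 else 0)
        = (gs.take (j+1)).sum + cond c 1 0 := by
  induction c, gs using stepG.induct with
  | case1 c => intro j hj; simp at hj
  | case2 c g => intro j hj; simp at hj
  | case3 c g h t ih =>
    intro j hj
    cases j with
    | zero =>
      simp only [stepG, List.take_succ_cons, List.take_zero, List.sum_cons, List.sum_nil,
        List.getD_cons_zero, Nat.add_zero]
      rcases Nat.eq_zero_or_pos g with hg | hg
      · subst hg; cases c <;> simp
      · rw [if_pos hg]; cases c <;> simp <;> omega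
    | succ k =>
      have hk : k + 1 < (h :: t).length := by simpa using hj
      have H := ih k hk
      simp only [stepG, List.take_succ_cons, List.sum_cons, List.getD_cons_succ,
        List.getD_eq_getElem?_getD] at H ⊢
      rcases Nat.eq_zero_or_pos g with hg | hg
      · subst hg
        simp only [show decide (0 < 0) = false from rfl, cond_false, Nat.add_zero] at H
        cases c <;> simp <;> omega
      · rw [(by simp [hg] : decide (0 < g) = true)] at H ⊢
        simp only [cond_true] at H
        cases c <;> simp <;> omega

lemma sum_take_succ : ∀ (l : List ℕ) (j : ℕ), j < l.length →
    (l.take (j+1)).sum = (l.take j).sum + l.getD j 0 := by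
  intro l
  induction l with
  | nil => intro j hj; simp at hj
  | cons x xs ih =>
    intro j hj
    cases j with
    | zero => simp
    | succ k =>
      have := ih k (by simpa using hj)
      simp only [List.take_succ_cons, List.sum_cons, List.getD_cons_succ]
      omega

lemma iter_len (t : ℕ) (gs : List ℕ) : ((stepG false)^[t] gs).length = gs.length := by
  induction t with
  | zero => rfl
  | succ t ih => rw [Function.iterate_succ_apply', stepG_len, ih]

lemma iter_sum (t : ℕ) (gs : List ℕ) (hne : gs ≠ []) :
    ((stepG false)^[t] gs).sum = gs.sum := by
  induction t with
  | zero => rfl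
  | succ t ih =>
    rw [Function.iterate_succ_apply', stepG_sum, ih]
    · simp
    · intro h
      have := iter_len t gs
      rw [h] at this
      simp at this
      exact hne (List.length_eq_zero_iff.mp this.symm)

lemma invariant (gs : List ℕ) : ∀ t j, j + 1 < gs.length →
    (((stepG false)^[t] gs).take (j+1)).sum ≤ (gs.take (j+1)).sum + j - t := by
  intro t
  induction t with
  | zero => intro j hj; simp
  | succ t ihT =>
    intro j hj
    rw [Function.iterate_succ_apply']
    set w := (stepG false)^[t] gs with hw
    have hlen : w.length = gs.length := iter_len t gs
    have hjw : j + 1 < w.length := by omega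
    have hpre := stepG_prefix false w j hjw
    simp only [Bool.cond_false, Nat.add_zero] at hpre
    have e2 : (w.take (j+1)).sum = (w.take j).sum + w.getD j 0 :=
      sum_take_succ w j (by omega)
    rcases Nat.eq_zero_or_pos (w.getD j 0) with hz | hp
    · rw [hz, if_neg (by omega)] at hpre
      rw [Nat.add_zero] at hpre
      cases j with
      | zero =>
        rw [hpre, e2, hz]
        simp
      | succ k =>
        have hik := ihT k (by omega)
        have mono : (gs.take (k+1)).sum ≤ (gs.take (k+1+1)).sum := by
          rw [sum_take_succ gs (k+1) (by omega)]; omega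
        rw [hz] at e2
        omega
    · rw [if_pos hp] at hpre
      have hij := ihT j hj
      omega

/-- inverse encoding -/
def fromW : List Bool → List ℕ
  | [] => [0]
  | false :: w => 0 :: fromW w
  | true :: w =>
    match fromW w with
    | [] => [1]
    | g :: t => (g+1) :: t

lemma fromW_cons (w : List Bool) : ∃ g t, fromW w = g :: t := by
  induction w with
  | nil => exact ⟨0, [], rfl⟩
  | cons a w ih =>
    obtain ⟨g, t, h⟩ := ih
    cases a
    · exact ⟨0, fromW w, rfl⟩
    · exact ⟨g + 1, t, by simp [fromW, h]⟩

lemma toW_zero_cons (g : ℕ) (t : List ℕ) : toW (0 :: g :: t) = false :: toW (g :: t) := rfl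

lemma toW_fromW (w : List Bool) : toW (fromW w) = w := by
  induction w with
  | nil => rfl
  | cons a w ih =>
    obtain ⟨g, t, h⟩ := fromW_cons w
    cases a
    · show toW (0 :: fromW w) = false :: w
      rw [h, toW_zero_cons, ← h, ih]
    · show toW (fromW (true :: w)) = true :: w
      have : fromW (true :: w) = (g+1) :: t := by simp [fromW, h]
      rw [this, toW_succ, ← h, ih]

lemma fromW_len (w : List Bool) : (fromW w).length = w.count false + 1 := by
  induction w with
  | nil => rfl
  | cons a w ih =>
    obtain ⟨g, t, h⟩ := fromW_cons w
    cases a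
    · simp [fromW, ih]
    · have : fromW (true :: w) = (g+1) :: t := by simp [fromW, h]
      rw [this]
      rw [h] at ih
      simpa using ih

lemma fromW_sum (w : List Bool) : (fromW w).sum = w.count true := by
  induction w with
  | nil => rfl
  | cons a w ih =>
    obtain ⟨g, t, h⟩ := fromW_cons w
    cases a
    · simp [fromW, ih]
    · have : fromW (true :: w) = (g+1) :: t := by simp [fromW, h]
      rw [this]
      rw [h] at ih
      simp only [List.sum_cons] at ih ⊢
      simp [List.count_cons]
      omega

lemma count_add_count (w : List Bool) : w.count false + w.count true = w.length := by
  induction w with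
  | nil => rfl
  | cons a w ih => cases a <;> simp [List.count_cons] <;> omega

lemma iter_flip_toW (t : ℕ) (gs : List ℕ) :
    flipWord^[t] (toW gs) = toW ((stepG false)^[t] gs) := by
  induction t with
  | zero => rfl
  | succ t ih => rw [Function.iterate_succ_apply', Function.iterate_succ_apply', ih, flip_toW]

lemma toW_repl (a b : ℕ) :
    toW (List.replicate a 0 ++ [b]) = List.replicate a false ++ List.replicate b true := by
  induction a with
  | zero => rfl
  | succ a ih =>
    cases ha : List.replicate a (0:ℕ) ++ [b] with
    | nil => simp at ha
    | cons y ys =>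
      have h0 : List.replicate (a+1) (0:ℕ) ++ [b] = 0 :: y :: ys := by
        rw [List.replicate_succ, List.cons_append, ha]
      rw [h0, toW_zero_cons, ← ha, ih, List.replicate_succ, List.cons_append]


/-- Every binary word of length `n` is sorted (into `0^a 1^b`) by `n-1` flips. -/
theorem stmt0 (w : List Bool) :
    flipWord^[w.length - 1] w =
      List.replicate (w.count false) false ++ List.replicate (w.count true) true := by
  set a := w.count false with hA
  set b := w.count true with hB
  have hn : a + b = w.length := count_add_count w
  set gs := fromW w with hgs
  have hlen : gs.length = a + 1 := fromW_len w
  have hsum : gs.sum = b := fromW_sum w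
  have hne : gs ≠ [] := by obtain ⟨g, t, h⟩ := fromW_cons w; rw [← hgs] at h; simp [h]
  set G := (stepG false)^[w.length - 1] gs with hG
  have hGlen : G.length = a + 1 := by rw [hG, iter_len, hlen]
  have hGsum : G.sum = b := by rw [hG, iter_sum _ _ hne, hsum]
  have htake : (G.take a).sum = 0 := by
    cases ha : a with
    | zero => simp
    | succ a' =>
      have hj : a' + 1 < gs.length := by omega
      have hinv := invariant gs (w.length - 1) a' hj
      have hsplit : gs.sum = (gs.take (a'+1)).sum + (gs.drop (a'+1)).sum := by
        rw [← List.sum_append, List.take_append_drop]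
      rw [← hG] at hinv
      omega
  have hdrop : G.drop a = [b] := by
    have hl : (G.drop a).length = 1 := by rw [List.length_drop]; omega
    have hs : (G.drop a).sum = b := by
      have hsplit : G.sum = (G.take a).sum + (G.drop a).sum := by
        rw [← List.sum_append, List.take_append_drop]
      omega
    cases hd : G.drop a with
    | nil => rw [hd] at hl; simp at hl
    | cons x xs =>
      rw [hd] at hl hs
      cases xs with
      | nil => simp at hs; rw [hs]
      | cons y ys => simp at hl
  have htk : G.take a = List.replicate a (0:ℕ) := by
    have hlt : (G.take a).length = a := by rw [List.length_take]; omega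
    rw [List.eq_replicate_iff]
    refine ⟨hlt, fun x hx => ?_⟩
    have := List.sum_eq_zero_iff.mp htake
    exact this x hx
  have hGeq : G = List.replicate a 0 ++ [b] := by
    rw [← List.take_append_drop a G, htk, hdrop]
  calc flipWord^[w.length - 1] w
      = flipWord^[w.length - 1] (toW gs) := by rw [hgs, toW_fromW]
    _ = toW G := by rw [iter_flip_toW, hG]
    _ = List.replicate a false ++ List.replicate b true := by rw [hGeq, toW_repl]
end

section
/- If u and v are binary words of the same length with the same number of zeros and u ⊴ v, then F(u) ⊴ F(v), where F is the flip operator. -/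
/-! `u ⊴ v` says that `u` and `v` have the same number of zeros and that every prefix of `u`
has at least as many zeros as the prefix of `v` of the same length. Flipping adds one zero to the
prefix of length `j + 1` exactly when positions `j, j + 1` carry a factor `10`, and changes no
other prefix count; the resulting comparison at `j + 1` is forced by the prefix inequalities at
`j`, `j + 1` and `j + 2`. -/

section LinearOrder

variable {α : Type*} [LinearOrder α]

theorem List.Forall₂.countP_lt_le {l₁ l₂ : List α} (h : List.Forall₂ (· ≤ ·) l₁ l₂)
    (k : α) : l₂.countP (· < k) ≤ l₁.countP (· < k) := by
  induction h with
  | nil => rfl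
  | @cons a b _ _ hab _ ih =>
    simp only [List.countP_cons, decide_eq_true_eq]
    by_cases hb : b < k
    · simp only [hb, lt_of_le_of_lt hab hb, if_true]
      omega
    · split_ifs <;> omega

theorem List.forall₂_le_of_countP_lt_le :
    ∀ {l₁ l₂ : List α}, l₁.Pairwise (· < ·) → l₂.Pairwise (· < ·) →
      l₁.length = l₂.length → (∀ k, l₂.countP (· < k) ≤ l₁.countP (· < k)) →
      List.Forall₂ (· ≤ ·) l₁ l₂
  | [], [], _, _, _, _ => .nil
  | a :: l₁, b :: l₂, h₁, h₂, hlen, hcount => by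
    rw [List.pairwise_cons] at h₁ h₂
    have hab : a ≤ b := by
      by_contra! hba
      have := hcount a
      rw [List.countP_cons, List.countP_cons, List.countP_eq_zero (l := l₁) |>.mpr
        (fun x hx => by simpa using (h₁.1 x hx).le)] at this
      simp [hba] at this
    refine .cons hab
      (List.forall₂_le_of_countP_lt_le h₁.2 h₂.2 (by simpa using hlen) fun k => ?_)
    have := hcount k
    simp only [List.countP_cons, decide_eq_true_eq] at this
    by_cases hbk : b < k
    · simp only [hbk, lt_of_le_of_lt hab hbk, if_true] at this
      omega
    · rw [List.countP_eq_zero.mpr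
        (fun x hx => by simpa using fun hxk => hbk ((h₂.1 x hx).trans hxk))]
      exact Nat.zero_le _

end LinearOrder

theorem List.countP_lt_succ (l : List ℕ) (k : ℕ) :
    l.countP (· < k + 1) = l.countP (· < k) + l.count k := by
  induction l with
  | nil => rfl
  | cons a l ih =>
    simp only [List.countP_cons, List.count_cons, ih, beq_iff_eq, decide_eq_true_eq]
    split_ifs <;> omega

def zeroCount (w : List Bool) (k : ℕ) : ℕ := (w.take k).count false

theorem zeroCount_cons_succ (a : Bool) (w : List Bool) (k : ℕ) :
    zeroCount (a :: w) (k + 1) = zeroCount w k + if a = false then 1 else 0 := by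
  cases a <;> simp [zeroCount]

theorem zeroCount_succ (w : List Bool) (k : ℕ) :
    zeroCount w (k + 1) = zeroCount w k + if w.getD k true = false then 1 else 0 := by
  induction w generalizing k with
  | nil => simp [zeroCount]
  | cons a w ih =>
    cases k with
    | zero => cases a <;> simp [zeroCount]
    | succ k =>
      simp only [zeroCount, List.take_succ_cons, List.count_cons, List.getD_cons_succ] at ih ⊢
      rw [ih k]
      omega

theorem pairwise_zeroPositions (w : List Bool) : (zeroPositions w).Pairwise (· < ·) :=
  List.pairwise_lt_range.filter _

theorem mem_zeroPositions {w : List Bool} {i : ℕ} :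
    i ∈ zeroPositions w ↔ w.getD i true = false := by
  simp only [zeroPositions, List.mem_filter, List.mem_range, decide_eq_true_eq,
    and_iff_right_iff_imp]
  intro h
  by_contra! hi
  simp [List.getElem?_eq_none hi] at h

theorem count_zeroPositions (w : List Bool) (i : ℕ) :
    (zeroPositions w).count i = if w.getD i true = false then 1 else 0 := by
  split_ifs with h
  · exact List.count_eq_one_of_mem (pairwise_zeroPositions w).nodup (mem_zeroPositions.mpr h)
  · exact List.count_eq_zero_of_not_mem (mt mem_zeroPositions.mp h)

theorem countP_zeroPositions (w : List Bool) (k : ℕ) :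
    (zeroPositions w).countP (· < k) = zeroCount w k := by
  induction k with
  | zero => simp [zeroCount]
  | succ k ih => rw [List.countP_lt_succ, ih, count_zeroPositions, zeroCount_succ]

theorem length_zeroPositions (w : List Bool) : (zeroPositions w).length = w.count false := by
  rw [← List.countP_eq_length.mpr fun i hi => ?_, countP_zeroPositions, zeroCount,
    List.take_length]
  simpa using (List.mem_filter.mp hi).1

theorem count_false_flipWord : ∀ w : List Bool, (flipWord w).count false = w.count false
  | [] => rfl
  | false :: w => by simp [flipWord, count_false_flipWord w]
  | [true] => rfl
  | true :: true :: w => by simpa [flipWord] using count_false_flipWord (true :: w)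
  | true :: false :: w => by simp [flipWord, count_false_flipWord w]

theorem zeroCount_flipWord_succ : ∀ (w : List Bool) (j : ℕ),
    zeroCount (flipWord w) (j + 1) =
      zeroCount w (j + 1) + if w.getD j true = true ∧ w.getD (j + 1) true = false then 1 else 0
  | [], j => by simp [flipWord, zeroCount]
  | false :: w, 0 => by simp [flipWord, zeroCount]
  | false :: w, j + 1 => by
    simp only [flipWord, zeroCount_cons_succ, zeroCount_flipWord_succ w j, List.getD_cons_succ]
    omega
  | [true], j => by cases j <;> simp [flipWord, zeroCount]
  | true :: true :: w, 0 => by simp [flipWord, zeroCount]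
  | true :: true :: w, j + 1 => by
    simp only [flipWord, zeroCount_cons_succ, zeroCount_flipWord_succ (true :: w) j,
      List.getD_cons_succ]
    omega
  | true :: false :: w, 0 => by simp [flipWord, zeroCount]
  | true :: false :: w, 1 => by simp [flipWord, zeroCount]
  | true :: false :: w, j + 2 => by
    simp only [flipWord, zeroCount_cons_succ, zeroCount_flipWord_succ w j, List.getD_cons_succ]
    omega

theorem wle_iff {u v : List Bool} :
    WLE u v ↔ u.count false = v.count false ∧ ∀ k, zeroCount v k ≤ zeroCount u k := by
  simp only [WLE, ← length_zeroPositions, ← countP_zeroPositions]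
  exact ⟨fun h => ⟨h.length_eq, h.countP_lt_le⟩, fun h =>
    List.forall₂_le_of_countP_lt_le (pairwise_zeroPositions u) (pairwise_zeroPositions v)
      h.1 h.2⟩

theorem zeroCount_flipWord_le {u v : List Bool} (h : ∀ k, zeroCount v k ≤ zeroCount u k)
    (k : ℕ) : zeroCount (flipWord v) k ≤ zeroCount (flipWord u) k := by
  cases k with
  | zero => simp [zeroCount]
  | succ j =>
    have h₀ := h j
    have h₁ := h (j + 1)
    have h₂ := h (j + 2)
    rw [zeroCount_flipWord_succ, zeroCount_flipWord_succ]
    simp only [zeroCount_succ] at h₁ h₂ ⊢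
    generalize u.getD j true = a, u.getD (j + 1) true = b, v.getD j true = c,
      v.getD (j + 1) true = d at h₁ h₂ ⊢
    cases a <;> cases b <;> cases c <;> cases d <;> simp at h₁ h₂ ⊢ <;> omega

theorem stmt2_general (u v : List Bool) (h : WLE u v) :
    WLE (flipWord u) (flipWord v) := by
  rw [wle_iff] at h ⊢
  exact ⟨by simp only [count_false_flipWord, h.1], zeroCount_flipWord_le h.2⟩

/-- Flip is monotone for `⊴`. -/
theorem stmt2 (u v : List Bool) (hlen : u.length = v.length)
    (hz : u.count false = v.count false) (h : WLE u v) :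
    WLE (flipWord u) (flipWord v) :=
  stmt2_general u v h
end

section
/- For every permutation π of length n, P^{n-1}(π) is the identity permutation 1 2 ⋯ n, where P is the pop-stack sorting operator. -/
/-!
Fix a threshold `k` and look at the binary word `proj k π` (zeros mark the entries below `k`).
A decreasing run projects to a block `1^a 0^b`, and since runs meet in ascents, reversing the
runs of `π` tumbles its projection. Under a tumble, every zero either moves left or lands at most
one place after the previous zero's old position. By induction on `t`, after `t` tumbles of a word
of length `n` with `m` zeros, the `i`-th zero (from `0`) sits at a position at most
`max i (n - m + 2 i - t)`. For `t ≥ n - 1` this is `i`, so the zeros form a prefix: every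
projection of `P^{n-1}(π)` is sorted, hence so is `P^{n-1}(π)`.
-/

namespace List

theorem add_le_getElem_of_pairwise_lt {s : ℕ} :
    ∀ {l : List ℕ}, l.Pairwise (· < ·) → (∀ x ∈ l, s ≤ x) →
      ∀ (i : ℕ) (hi : i < l.length), s + i ≤ l[i]
  | [], _, _, _, hi => absurd hi (Nat.not_lt_zero _)
  | x :: l, hl, hs, i, hi => by
    rw [pairwise_cons] at hl
    cases i with
    | zero => simpa using hs x mem_cons_self
    | succ i =>
      have := add_le_getElem_of_pairwise_lt (s := s + 1) hl.2
        (fun y hy => (hs x mem_cons_self).trans_lt (hl.1 y hy)) i (by simpa using hi)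
      simp only [getElem_cons_succ]
      omega

theorem getElem_add_length_le_of_pairwise_lt {N : ℕ} :
    ∀ {l : List ℕ}, l.Pairwise (· < ·) → (∀ x ∈ l, x < N) →
      ∀ (i : ℕ) (hi : i < l.length), l[i] + l.length ≤ N + i
  | [], _, _, _, hi => absurd hi (Nat.not_lt_zero _)
  | x :: l, hl, hN, i, hi => by
    rw [pairwise_cons] at hl
    cases i with
    | zero =>
      cases l with
      | nil => simpa using hN x mem_cons_self
      | cons y l =>
        have hy := getElem_add_length_le_of_pairwise_lt hl.2
          (fun z hz => hN z (mem_cons_of_mem _ hz)) 0 (by simp)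
        have hxy := hl.1 y mem_cons_self
        simp only [getElem_cons_zero, length_cons] at hy ⊢
        omega
    | succ i =>
      have := getElem_add_length_le_of_pairwise_lt hl.2
        (fun z hz => hN z (mem_cons_of_mem _ hz)) i (by simpa using hi)
      simp only [getElem_cons_succ, length_cons]
      omega

theorem sortedLE_of_getElem_findIdxs_not_le {u : List Bool}
    (h : ∀ i (hi : i < (u.findIdxs (!·)).length), (u.findIdxs (!·))[i] ≤ i) : u.SortedLE := by
  rw [sortedLE_iff_getElem_le_getElem_of_le]
  intro i j hi hj hij
  cases huj : u[j] with
  | true => exact Bool.le_true _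
  | false =>
    obtain ⟨idx, hidx, hzj⟩ := mem_iff_getElem.1
      ((mem_findIdxs_iff_pos_getElem (p := (!·)) hj).2 (by simp [huj]))
    have hz : i < (u.findIdxs (!·)).length := by have := h idx hidx; omega
    have hlow := add_le_getElem_of_pairwise_lt pairwise_findIdxs
      (fun x _ => Nat.zero_le x) i hz
    have hzi : (u.findIdxs (!·))[i] = i := le_antisymm (h i hz) (by simpa using hlow)
    have hui : u[i] = false := by simpa [hzi] using getElem_getElem_findIdxs hz
    rw [hui]

end List

theorem findIdxs_not_replicate_true (a s : ℕ) :
    (List.replicate a true).findIdxs (!·) s = [] := by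
  simp [List.findIdxs_eq_nil_iff]

theorem findIdxs_not_replicate_false (b s : ℕ) :
    (List.replicate b false).findIdxs (!·) s = List.range' s b := by
  induction b generalizing s with
  | zero => rfl
  | succ b ih => simp [List.replicate_succ, List.range'_succ, ih]

theorem length_findIdxs_not (w : List Bool) (s : ℕ) :
    (w.findIdxs (!·) s).length = w.count false := by
  simp [List.count_eq_countP]

/-- `ZerosAdvance c q p` relates the zero positions `q` of a word after a tumble to those `p`
before it: each zero either moves strictly left or ends up at most one place after the old
position of the preceding zero (`c` plays that role for the first zero). -/
inductive ZerosAdvance : ℕ → List ℕ → List ℕ → Prop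
  | nil (c : ℕ) : ZerosAdvance c [] []
  | cons {c q p : ℕ} {qs ps : List ℕ} :
      q ≤ max c (p - 1) → ZerosAdvance (p + 1) qs ps → ZerosAdvance c (q :: qs) (p :: ps)

namespace ZerosAdvance

theorem length_eq {c : ℕ} {q p : List ℕ} (h : ZerosAdvance c q p) : q.length = p.length := by
  induction h <;> simp [*]

theorem range'_append {a : ℕ} (ha : 0 < a) :
    ∀ (b s c : ℕ) {Q P : List ℕ}, ZerosAdvance (s + a + b + 1) Q P →
      ZerosAdvance c (List.range' s (b + 1) ++ Q) (List.range' (s + a) (b + 1) ++ P)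
  | 0, s, c, Q, P, h => by
    simpa [List.range'_succ] using cons (by omega) h
  | b + 1, s, c, Q, P, h => by
    rw [List.range'_succ, List.range'_succ (s := s + a)]
    refine cons (by omega) ?_
    have := range'_append ha b (s + 1) (s + a + 1) (Q := Q) (P := P) (by convert h using 2; omega)
    rwa [show s + 1 + a = s + a + 1 by omega] at this

theorem getElem_le {M t : ℕ} {c : ℕ} {q p : List ℕ} (h : ZerosAdvance c q p) :
    ∀ {j : ℕ}, (∀ i (hi : i < p.length), p[i] ≤ max (j + i) (M + 2 * (j + i) - t)) →
      c ≤ max j (M + 2 * j - (t + 1)) →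
      ∀ i (hi : i < q.length), q[i] ≤ max (j + i) (M + 2 * (j + i) - (t + 1)) := by
  induction h with
  | nil => intro j _ _ i hi; simp at hi
  | @cons c q p qs ps hq _ ih =>
    intro j hp hc i hi
    have hp0 := hp 0 (by simp)
    rw [List.getElem_cons_zero] at hp0
    cases i with
    | zero => rw [List.getElem_cons_zero]; omega
    | succ i =>
      have hps : ∀ i (hi : i < ps.length),
          ps[i] ≤ max (j + 1 + i) (M + 2 * (j + 1 + i) - t) := by
        intro i hi
        have := hp (i + 1) (by simpa using hi)
        rw [List.getElem_cons_succ] at this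
        omega
      have := ih hps (by omega) i (by simpa using hi)
      rw [List.getElem_cons_succ]
      omega

end ZerosAdvance

theorem List.Pairwise.eq_replicate_true_append_replicate_false {x : List Bool}
    (hx : x.Pairwise (· ≥ ·)) :
    x = List.replicate (x.count true) true ++ List.replicate (x.count false) false := by
  induction x with
  | nil => rfl
  | cons a l ih =>
    rw [List.pairwise_cons] at hx
    cases a
    · have hl : l = List.replicate l.length false :=
        List.eq_replicate_iff.2 ⟨rfl, fun b hb => le_bot_iff.1 (hx.1 b hb)⟩
      rw [hl]
      simp [List.count_replicate, List.replicate_succ]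
    · conv_lhs => rw [ih hx.2]
      simp [List.replicate_succ]

namespace Tumble

theorem zerosAdvance {w u : List Bool} (h : Tumble w u) :
    ∀ s c, (w.head? = some false → s ≤ max c (s - 1)) →
      ZerosAdvance c (u.findIdxs (!·) s) (w.findIdxs (!·) s) := by
  induction h with
  | nil => intro s c _; exact .nil c
  | zero _ ih =>
    intro s c hs
    simpa using ZerosAdvance.cons (hs rfl) (ih (s + 1) (s + 1) fun _ => le_max_left _ _)
  | one _ hw ih =>
    intro s c _
    simpa using ih (s + 1) c fun h => absurd h hw
  | block a b ha hb _ ih =>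
    intro s c _
    obtain ⟨b, rfl⟩ := Nat.exists_eq_add_of_lt hb
    have := ZerosAdvance.range'_append ha b s c
      (ih (s + a + b + 1) (s + a + b + 1) fun _ => le_max_left _ _)
    simp only [List.append_assoc, List.findIdxs_append, findIdxs_not_replicate_true,
      findIdxs_not_replicate_false, List.length_replicate, List.nil_append]
    convert this using 3 <;> omega

theorem count_false_eq {w u : List Bool} (h : Tumble w u) :
    u.count false = w.count false := by
  simpa only [length_findIdxs_not] using (h.zerosAdvance 0 0 (by simp)).length_eq

theorem replicate_false_append {w u : List Bool} (h : Tumble w u) (b : ℕ) :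
    Tumble (List.replicate b false ++ w) (List.replicate b false ++ u) := by
  induction b with
  | zero => exact h
  | succ b ih => exact zero ih

theorem replicate_true_append {w u : List Bool} (h : Tumble w u) (hw : w.head? ≠ some false)
    (a : ℕ) : Tumble (List.replicate a true ++ w) (List.replicate a true ++ u) := by
  induction a with
  | zero => exact h
  | succ a ih =>
    refine one ih ?_
    cases a <;> simp [List.replicate_succ, hw]

theorem antitone_append {x w u : List Bool} (hx : x.Pairwise (· ≥ ·))
    (hxw : ∀ a ∈ x.getLast?, ∀ b ∈ w.head?, a ≤ b) (h : Tumble w u) :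
    Tumble (x ++ w) (x.reverse ++ u) := by
  rw [hx.eq_replicate_true_append_replicate_false] at hxw ⊢
  set a := x.count true
  set b := x.count false
  rcases Nat.eq_zero_or_pos a with ha | ha
  · simpa [ha] using h.replicate_false_append b
  rcases Nat.eq_zero_or_pos b with hb | hb
  · have hw : w.head? ≠ some false := fun hw =>
      absurd (hxw true (by simp [hb, List.getLast?_replicate, ha.ne']) false hw) (by decide)
    simpa [hb] using h.replicate_true_append hw a
  · simpa using block a b ha hb h

end Tumble

theorem tumble_flatten_map_reverse : ∀ {L : List (List Bool)},
    (∀ x ∈ L, x ≠ [] ∧ x.Pairwise (· ≥ ·)) →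
    L.IsChain (fun x y => ∀ a ∈ x.getLast?, ∀ b ∈ y.head?, a ≤ b) →
    Tumble L.flatten (L.map List.reverse).flatten
  | [], _, _ => .nil
  | x :: L, hL, hchain => by
    rw [List.isChain_cons] at hchain
    refine Tumble.antitone_append (hL x List.mem_cons_self).2 ?_
      (tumble_flatten_map_reverse (fun y hy => hL y (List.mem_cons_of_mem _ hy)) hchain.2)
    intro a ha b hb
    cases L with
    | nil => simp at hb
    | cons y L =>
      have hy : y ≠ [] := (hL y (by simp)).1
      refine hchain.1 y rfl a ha b ?_
      simpa [List.head?_append, hy] using hb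

theorem monotone_decide_le (k : ℕ) : Monotone (fun x : ℕ => decide (k ≤ x)) :=
  fun _ _ hab => Bool.le_iff_imp.2 fun ha => decide_eq_true ((of_decide_eq_true ha).trans hab)

theorem tumble_proj_popStack (k : ℕ) (w : List ℕ) :
    Tumble (proj k w) (proj k (popStack w)) := by
  set L := w.splitBy (fun a b => decide (b < a))
  have hw : proj k w = (L.map (proj k)).flatten := by
    conv_lhs => rw [← List.flatten_splitBy (fun a b => decide (b < a)) w]
    exact List.map_flatten
  have hpop : proj k (popStack w) = ((L.map (proj k)).map List.reverse).flatten := by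
    simp [popStack, proj, L, List.map_flatten, Function.comp_def]
  rw [hw, hpop]
  refine tumble_flatten_map_reverse ?_ ?_
  · intro x hx
    obtain ⟨r, hr, rfl⟩ := List.mem_map.1 hx
    refine ⟨by simpa [proj] using List.ne_nil_of_mem_splitBy hr, ?_⟩
    have hdec : r.Pairwise (· > ·) := List.isChain_iff_pairwise.1
      ((List.isChain_of_mem_splitBy hr).imp fun {a b} h => (of_decide_eq_true h : b < a))
    exact List.pairwise_map.2 (hdec.imp fun h => monotone_decide_le k h.le)
  · refine (List.isChain_map _).2 ((List.isChain_getLast_head_splitBy _ w).imp ?_)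
    rintro r r' ⟨hr, hr', hlast⟩ a ha b hb
    simp only [proj, List.getLast?_map, List.head?_map, List.getLast?_eq_some_getLast hr,
      List.head?_eq_some_head hr', Option.map_some, Option.mem_def, Option.some.injEq] at ha hb
    subst ha hb
    exact monotone_decide_le k (by simpa using hlast)

namespace TumbleN

theorem count_false_eq : ∀ {t : ℕ} {w u : List Bool}, TumbleN t w u →
    u.count false = w.count false
  | 0, _, _, rfl => rfl
  | _ + 1, _, _, ⟨_, hv, hvu⟩ => hvu.count_false_eq.trans hv.count_false_eq

theorem getElem_findIdxs_not_le : ∀ {t : ℕ} {w u : List Bool}, TumbleN t w u →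
    ∀ i (hi : i < (u.findIdxs (!·)).length),
      (u.findIdxs (!·))[i] ≤ max i (w.length - w.count false + 2 * i - t)
  | 0, w, _, rfl => by
    intro i hi
    have := List.getElem_add_length_le_of_pairwise_lt List.pairwise_findIdxs
      (fun x hx => by simpa using List.lt_add_of_mem_findIdxs x hx) i hi
    rw [length_findIdxs_not] at this
    omega
  | t + 1, w, u, ⟨v, hv, hvu⟩ => by
    intro i hi
    simpa using (hvu.zerosAdvance 0 0 (by simp)).getElem_le (j := 0)
      (fun i hi => by simpa using getElem_findIdxs_not_le hv i hi) (by simp) i hi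

theorem sortedLE {t : ℕ} {w u : List Bool} (h : TumbleN t w u) (ht : w.length ≤ t + 1) :
    u.SortedLE := by
  refine List.sortedLE_of_getElem_findIdxs_not_le fun i hi => ?_
  have hbound := h.getElem_findIdxs_not_le i hi
  have hcount := h.count_false_eq
  rw [length_findIdxs_not] at hi
  have := w.count_le_length (a := false)
  omega

end TumbleN

theorem sortedLE_of_forall_sortedLE_proj {w : List ℕ} (h : ∀ k, (proj k w).SortedLE) :
    w.SortedLE := by
  rw [List.sortedLE_iff_getElem_le_getElem_of_le]
  intro i j hi hj hij
  have := List.sortedLE_iff_getElem_le_getElem_of_le.1 (h w[i]) (i := i) (j := j)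
    (hi := by simpa [proj]) (hj := by simpa [proj]) hij
  exact of_decide_eq_true (Bool.le_iff_imp.1 (by simpa [proj] using this) rfl)

theorem tumbleN_proj_popStack_iterate (k : ℕ) (w : List ℕ) :
    ∀ t, TumbleN t (proj k w) (proj k (popStack^[t] w))
  | 0 => rfl
  | t + 1 => by
    rw [Function.iterate_succ_apply']
    exact ⟨_, tumbleN_proj_popStack_iterate k w t, tumble_proj_popStack k _⟩

theorem popStack_perm (w : List ℕ) : (popStack w).Perm w := by
  refine List.perm_iff_count.2 fun a => ?_
  conv_rhs => rw [← List.flatten_splitBy (fun a b => decide (b < a)) w]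
  simp only [popStack, List.count_flatten, List.map_map, Function.comp_def, List.count_reverse]

theorem popStack_iterate_perm (w : List ℕ) (t : ℕ) : (popStack^[t] w).Perm w :=
  Function.Iterate.rec (fun v : List ℕ => v.Perm w) (.refl w)
    (fun _ hv => (popStack_perm _).trans hv) t

/-- Every permutation of length `n` is sorted by `n-1` passes through a pop-stack. -/
theorem stmt5 (n : ℕ) (π : List ℕ) (h : π.Perm (List.range' 1 n)) :
    popStack^[n - 1] π = List.range' 1 n := by
  refine ((popStack_iterate_perm π (n - 1)).trans h).eq_of_sortedLE ?_ (List.sortedLE_range' 1 n 1)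
  refine sortedLE_of_forall_sortedLE_proj fun k =>
    (tumbleN_proj_popStack_iterate k π _).sortedLE ?_
  simp only [proj, List.length_map, h.length_eq, List.length_range']
  omega
end

section
/- For n ≥ 2, the permutation 2 3 ⋯ n 1 requires exactly n-1 applications of the pop-stack sorting operator P to be sorted: P^{n-1}(23⋯n1) is the identity, but P^{n-2}(23⋯n1) is not. -/
/-! After `k` passes, `2 3 ⋯ n 1` has become `2 ⋯ (n-k) 1 (n-k+1) ⋯ n`: its only descent is the
pair `(n-k, 1)`, so the next pass swaps exactly that pair and `1` moves one place to the left.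
Hence `1` reaches the front after `n - 1` passes and not before. -/

theorem popStack_append {l m : List ℕ} (h : ∀ x ∈ l.getLast?, ∀ y ∈ m.head?, x ≤ y) :
    popStack (l ++ m) = popStack l ++ popStack m := by
  simp only [popStack]
  rw [List.splitBy_append fun x hx y hy => by simpa using h x hx y hy]
  simp

theorem popStack_eq_self_of_isChain {l : List ℕ} (h : l.IsChain (· ≤ ·)) :
    popStack l = l := by
  induction l with
  | nil => rfl
  | cons a l ih =>
    rw [List.isChain_cons] at h
    rw [← List.singleton_append, popStack_append (by simpa using h.1), ih h.2]
    rfl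

theorem popStack_range' (s t : ℕ) : popStack (List.range' s t) = List.range' s t :=
  popStack_eq_self_of_isChain (List.sortedLE_range' s t 1).isChain

theorem popStack_pair {a b : ℕ} (h : b < a) : popStack [a, b] = [b, a] := by
  simp only [popStack]
  rw [List.splitBy_of_isChain (by simp) (by simpa using h)]
  simp

theorem popStack_moves_one_left (j t : ℕ) :
    popStack (List.range' 2 (j + 1) ++ 1 :: List.range' (j + 3) t) =
      List.range' 2 j ++ 1 :: List.range' (j + 2) (t + 1) := by
  have hsplit : List.range' 2 (j + 1) ++ 1 :: List.range' (j + 3) t =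
      List.range' 2 j ++ ([j + 2, 1] ++ List.range' (j + 3) t) := by
    simp [List.range'_concat, add_comm]
  rw [hsplit, popStack_append, popStack_append, popStack_range', popStack_range',
    popStack_pair (by omega)]
  · simp [List.range'_succ]
  · cases t <;> simp [List.range'_succ]
  · cases j <;> simp [List.getLast?_range']
    omega

theorem popStack_iterate_moves_one_left (k j t : ℕ) :
    popStack^[k] (List.range' 2 (j + k) ++ 1 :: List.range' (j + k + 2) t) =
      List.range' 2 j ++ 1 :: List.range' (j + 2) (t + k) := by
  induction k generalizing t with
  | zero => rfl
  | succ k ih =>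
    rw [Function.iterate_succ_apply, ← add_assoc, show j + k + 1 + 2 = j + k + 3 by omega,
      popStack_moves_one_left, ih, Nat.add_right_comm t 1 k, add_assoc]

/-- The permutation `2 3 ⋯ n 1` requires exactly `n-1` pop-stack passes to sort. -/
theorem stmt6 (n : ℕ) (hn : 2 ≤ n) :
    popStack^[n - 1] (List.range' 2 (n - 1) ++ [1]) = List.range' 1 n ∧
    popStack^[n - 2] (List.range' 2 (n - 1) ++ [1]) ≠ List.range' 1 n := by
  obtain ⟨N, rfl⟩ : ∃ N, n = N + 2 := ⟨n - 2, by omega⟩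
  have hstart (j k : ℕ) (hjk : j + k = N + 1) :
      List.range' 2 (N + 1) ++ [1] = List.range' 2 (j + k) ++ 1 :: List.range' (j + k + 2) 0 := by
    simp [hjk]
  constructor
  · rw [show N + 2 - 1 = N + 1 from rfl, hstart 0 (N + 1) (by omega),
      popStack_iterate_moves_one_left]
    simp [List.range'_succ]
  · rw [show N + 2 - 2 = N from rfl, show N + 2 - 1 = N + 1 from rfl,
      hstart 1 N (by omega), popStack_iterate_moves_one_left]
    simp [List.range'_succ]
end
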